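/- arXiv:2001.11896 — 2 statements merged into one kernel-verified Lean document; each statement's English description precedes it below -/
import Mathlib

section
/- Let C be an n×n real symmetric positive-definite matrix, let s be an integer with 1 ≤ s ≤ n, let x ∈ ℝⁿ and let X be an n×n real symmetric matrix such that X − xxᵀ is positive semidefinite and X_{ii} = x_i for all i. Then the function ψ ↦ log det( e^ψ (C ∘ X) + I − diag(x) ) − s·ψ is convex on ℝ. -/
/-!
Write `A = C ∘ X` and `D = I - diag x`. By the Schur product theorem `A ⪰ 0`; the diagonal of
`X - x xᵀ` gives `x i - x i ^ 2 ≥ 0`, so `x ≤ 1` and `D ⪰ 0`; and since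
`C ∘ (x xᵀ) = diag x * C * diag x`, the matrix `A + D` is positive definite. Congruence by
`(A + D)^{-1/2}` diagonalises the pencil `t A + D` simultaneously:
`det (t A + D) = det (A + D) * ∏ i, (μ i * t + (1 - μ i))` with `μ i ∈ [0, 1]`. Hence the function
is a constant plus `∑ i, log (μ i * e^ψ + 1 - μ i)` minus a linear term, and each summand is convex
because its derivative `1 - (1 - μ i) / (μ i * e^ψ + 1 - μ i)` is monotone.
-/

open Matrix

theorem ConvexOn.fun_sum {𝕜 E β ι : Type*} [Semiring 𝕜] [PartialOrder 𝕜] [AddCommMonoid E]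
    [AddCommMonoid β] [PartialOrder β] [IsOrderedAddMonoid β] [SMul 𝕜 E] [Module 𝕜 β]
    {s : Set E} (hs : Convex 𝕜 s) (t : Finset ι) {f : ι → E → β}
    (hf : ∀ i ∈ t, ConvexOn 𝕜 s (f i)) :
    ConvexOn 𝕜 s fun x => ∑ i ∈ t, f i x := by
  simpa only [← Finset.sum_fn] using
    Finset.sum_induction f (ConvexOn 𝕜 s) (fun _ _ => ConvexOn.add) (convexOn_const 0 hs) hf

namespace Real

lemma mul_exp_add_pos {a d : ℝ} (ha : 0 ≤ a) (hd : 0 ≤ d) (had : 0 < a + d) (ψ : ℝ) :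
    0 < a * exp ψ + d := by
  rcases ha.eq_or_lt with rfl | ha
  · simpa using had
  · positivity

lemma convexOn_log_mul_exp_add {a d : ℝ} (ha : 0 ≤ a) (hd : 0 ≤ d) (had : 0 < a + d) :
    ConvexOn ℝ Set.univ fun ψ => log (a * exp ψ + d) := by
  have hpos := mul_exp_add_pos ha hd had
  have hderiv (ψ : ℝ) :
      HasDerivAt (fun ψ => log (a * exp ψ + d)) (1 - d / (a * exp ψ + d)) ψ := by
    convert (((hasDerivAt_exp ψ).const_mul a).add_const d).log (hpos ψ).ne' using 1
    field_simp [(hpos ψ).ne']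
    ring
  refine Monotone.convexOn_univ_of_deriv (fun ψ => (hderiv ψ).differentiableAt) ?_
  rw [funext fun ψ => (hderiv ψ).deriv]
  intro ψ₁ ψ₂ h
  have := hpos ψ₁
  dsimp only
  gcongr

end Real

namespace Matrix

theorem det_conjStarAlgAut {R m : Type*} [CommRing R] [StarRing R] [Fintype m] [DecidableEq m]
    (U : unitary (Matrix m m R)) (M : Matrix m m R) :
    (Unitary.conjStarAlgAut R _ U M).det = M.det := by
  rw [Unitary.conjStarAlgAut_apply, det_mul, det_mul, mul_right_comm, ← det_mul,
    Unitary.mul_star_self_of_mem U.2, det_one, one_mul]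

theorem hadamard_vecMulVec {α m : Type*} [CommSemiring α] [Fintype m] [DecidableEq m]
    (C : Matrix m m α) (x y : m → α) :
    C ⊙ vecMulVec x y = diagonal x * C * diagonal y := by
  ext i j
  simp [vecMulVec_apply]
  ring

variable {m : Type*} [Fintype m] [DecidableEq m]

theorem IsHermitian.det_smul_add_one_sub {B : Matrix m m ℝ} (hB : B.IsHermitian) (t : ℝ) :
    (t • B + (1 - B)).det = ∏ i, (hB.eigenvalues i * t + (1 - hB.eigenvalues i)) := by
  set φ := Unitary.conjStarAlgAut ℝ _ hB.eigenvectorUnitary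
  have hdiag : t • B + (1 - B) =
      φ (diagonal fun i => hB.eigenvalues i * t + (1 - hB.eigenvalues i)) := by
    conv_lhs => rw [hB.spectral_theorem]
    rw [← map_one φ, ← map_smul, ← map_sub, ← map_add]
    congr 1
    ext i j
    by_cases h : i = j <;> simp [h, mul_comm]
  rw [hdiag, det_conjStarAlgAut, det_diagonal]

open scoped MatrixOrder ComplexOrder in
theorem IsHermitian.eigenvalues_le_one {𝕜 : Type*} [RCLike 𝕜] {B : Matrix m m 𝕜}
    (hB : B.IsHermitian) (h : (1 - B).PosSemidef) (i : m) : hB.eigenvalues i ≤ 1 := by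
  have hle : B ≤ algebraMap ℝ _ 1 := by simpa [le_iff] using h
  exact (le_algebraMap_iff_spectrum_le hB.isSelfAdjoint).mp hle _
    (hB.eigenvalues_mem_spectrum_real i)

open scoped MatrixOrder ComplexOrder in
theorem PosDef.exists_mul_mul_conjTranspose_eq_one {𝕜 : Type*} [RCLike 𝕜]
    {P : Matrix m m 𝕜} (hP : P.PosDef) : ∃ S : Matrix m m 𝕜, S * P * Sᴴ = 1 := by
  set R := CFC.sqrt P
  have hR : IsUnit R := CFC.isUnit_sqrt_iff_isStrictlyPositive.mpr hP.isStrictlyPositive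
  have hRH : Rᴴ = R := (CFC.sqrt_nonneg P).posSemidef.1
  have hRR : R * R = P := CFC.sqrt_mul_sqrt_self P hP.posSemidef.nonneg
  have hRdet : IsUnit R.det := (isUnit_iff_isUnit_det R).mp hR
  refine ⟨R⁻¹, ?_⟩
  rw [conjTranspose_nonsing_inv, hRH, ← hRR, ← Matrix.mul_assoc, nonsing_inv_mul _ hRdet,
    Matrix.one_mul, mul_nonsing_inv _ hRdet]

theorem PosSemidef.exists_det_smul_add_eq_prod {A D : Matrix m m ℝ} (hA : A.PosSemidef)
    (hD : D.PosSemidef) (hAD : (A + D).PosDef) :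
    ∃ μ : m → ℝ, (∀ i, 0 ≤ μ i ∧ μ i ≤ 1) ∧
      ∀ t : ℝ, (t • A + D).det = (A + D).det * ∏ i, (μ i * t + (1 - μ i)) := by
  obtain ⟨S, hSAD⟩ := hAD.exists_mul_mul_conjTranspose_eq_one
  set B := S * A * Sᴴ
  have hB : B.PosSemidef := hA.mul_mul_conjTranspose_same S
  have hSD : S * D * Sᴴ = 1 - B := by
    rw [← hSAD, Matrix.mul_add, Matrix.add_mul, add_sub_cancel_left]
  have hconj (t : ℝ) : S.det * (t • A + D).det * Sᴴ.det =
      ∏ i, (hB.1.eigenvalues i * t + (1 - hB.1.eigenvalues i)) := by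
    rw [← det_mul, ← det_mul, Matrix.mul_add, Matrix.add_mul, Matrix.mul_smul, Matrix.smul_mul,
      hSD, hB.1.det_smul_add_one_sub]
  refine ⟨hB.1.eigenvalues, fun i => ⟨hB.eigenvalues_nonneg i,
    hB.1.eigenvalues_le_one (hSD ▸ hD.mul_mul_conjTranspose_same S) i⟩, fun t => ?_⟩
  have hone := hconj 1
  simp only [one_smul, mul_one, add_sub_cancel, Finset.prod_const_one] at hone
  linear_combination (A + D).det * hconj t - (t • A + D).det * hone

theorem PosSemidef.convexOn_log_det_exp_smul_add {A D : Matrix m m ℝ}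
    (hA : A.PosSemidef) (hD : D.PosSemidef) (hAD : (A + D).PosDef) :
    ConvexOn ℝ Set.univ fun ψ => Real.log (Real.exp ψ • A + D).det := by
  obtain ⟨μ, hμ, hdet⟩ := hA.exists_det_smul_add_eq_prod hD hAD
  have hμ₀ (i : m) : 0 ≤ 1 - μ i := sub_nonneg.2 (hμ i).2
  have hμ₁ (i : m) : 0 < μ i + (1 - μ i) := by simp
  have hfactor (ψ : ℝ) (i : m) : 0 < μ i * Real.exp ψ + (1 - μ i) :=
    Real.mul_exp_add_pos (hμ i).1 (hμ₀ i) (hμ₁ i) ψ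
  have hlog : (fun ψ => Real.log (Real.exp ψ • A + D).det) =
      fun ψ => Real.log (A + D).det + ∑ i, Real.log (μ i * Real.exp ψ + (1 - μ i)) := by
    funext ψ
    rw [hdet, Real.log_mul hAD.det_pos.ne' (Finset.prod_pos fun i _ => hfactor ψ i).ne',
      Real.log_prod fun i _ => (hfactor ψ i).ne']
  rw [hlog]
  exact (convexOn_const _ convex_univ).add <| ConvexOn.fun_sum convex_univ _ fun i _ =>
    Real.convexOn_log_mul_exp_add (hμ i).1 (hμ₀ i) (hμ₁ i)

omit [Fintype m] in
theorem posSemidef_one_sub_diagonal {x : m → ℝ} (hx : ∀ i, x i ≤ 1) :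
    (1 - diagonal x).PosSemidef := by
  rw [← diagonal_one, diagonal_sub]
  exact .diagonal fun i => sub_nonneg.2 (hx i)

theorem PosDef.diagonal_mul_mul_diagonal_add_one_sub_diagonal {C : Matrix m m ℝ}
    (hC : C.PosDef) {x : m → ℝ} (hx : ∀ i, x i ≤ 1) :
    (diagonal x * C * diagonal x + (1 - diagonal x)).PosDef := by
  have hQ : (diagonal x * C * diagonal x).PosSemidef := by
    simpa using hC.posSemidef.conjTranspose_mul_mul_same (diagonal x)
  have hD := posSemidef_one_sub_diagonal hx
  refine .of_dotProduct_mulVec_pos (hQ.add hD).1 fun v hv => ?_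
  have hxv_eq : diagonal x *ᵥ v = x * v := funext (mulVec_diagonal x v)
  have hQv :
      star v ⬝ᵥ ((diagonal x * C * diagonal x) *ᵥ v) = star (x * v) ⬝ᵥ (C *ᵥ (x * v)) := by
    rw [← mulVec_mulVec, ← mulVec_mulVec, dotProduct_mulVec, ← hxv_eq]
    congr 1
    ext i
    simp [vecMul_diagonal, mulVec_diagonal, mul_comm]
  rw [add_mulVec, dotProduct_add, hQv]
  by_cases hxv : x * v = 0
  · have hDv : (1 - diagonal x) *ᵥ v = v := by
      rw [sub_mulVec, one_mulVec, hxv_eq, hxv, sub_zero]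
    simpa [hDv, hxv] using dotProduct_star_self_pos_iff.mpr hv
  · exact add_pos_of_pos_of_nonneg (hC.dotProduct_mulVec_pos hxv) (hD.dotProduct_mulVec_nonneg v)

omit [Fintype m] [DecidableEq m] in
theorem le_one_of_posSemidef_sub_vecMulVec {x : m → ℝ} {X : Matrix m m ℝ}
    (hpsd : (X - vecMulVec x x).PosSemidef) (hdiag : ∀ i, X i i = x i) (i : m) : x i ≤ 1 := by
  have h := hpsd.diag_nonneg (i := i)
  rw [Matrix.sub_apply, vecMulVec_apply, hdiag] at h
  nlinarith

end Matrix

theorem stmt_10_general (n : ℕ) (C : Matrix (Fin n) (Fin n) ℝ) (hC : C.PosDef)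
    (s : ℕ)
    (x : Fin n → ℝ) (X : Matrix (Fin n) (Fin n) ℝ)
    (hpsd : (X - vecMulVec x x).PosSemidef) (hdiag : ∀ i, X i i = x i) :
    ConvexOn ℝ Set.univ (fun ψ : ℝ =>
      Real.log (Real.exp ψ • (C.hadamard X) + 1 - Matrix.diagonal x).det
        - s * ψ) := by
  have hx := le_one_of_posSemidef_sub_vecMulVec hpsd hdiag
  have hX : X.PosSemidef := by simpa using hpsd.add (posSemidef_vecMulVec_self_star x)
  have hAD : (C ⊙ X + (1 - diagonal x)).PosDef := by
    rw [← sub_add_cancel X (vecMulVec x x), hadamard_add, hadamard_vecMulVec, add_assoc,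
      add_comm]
    exact (hC.diagonal_mul_mul_diagonal_add_one_sub_diagonal hx).add_posSemidef
      (hC.posSemidef.hadamard hpsd)
  simp_rw [add_sub_assoc]
  exact ((hC.posSemidef.hadamard hX).convexOn_log_det_exp_smul_add
    (posSemidef_one_sub_diagonal hx) hAD).sub <|
      (concaveOn_id convex_univ).smul (Nat.cast_nonneg s)

/-- Under the stated hypotheses the function
`ψ ↦ log det(e^ψ (C ∘ X) + I - diag(x)) - s ψ` is convex on `ℝ`. -/
theorem stmt_10 (n : ℕ) (C : Matrix (Fin n) (Fin n) ℝ) (hC : C.PosDef)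
    (s : ℕ) (hs1 : 1 ≤ s) (hs2 : s ≤ n)
    (x : Fin n → ℝ) (X : Matrix (Fin n) (Fin n) ℝ) (hXs : X.IsSymm)
    (hpsd : (X - vecMulVec x x).PosSemidef) (hdiag : ∀ i, X i i = x i) :
    ConvexOn ℝ Set.univ (fun ψ : ℝ =>
      Real.log (Real.exp ψ • (C.hadamard X) + 1 - Matrix.diagonal x).det
        - s * ψ) :=
  stmt_10_general n C hC s x X hpsd hdiag
end

section
/- Let C be an n×n real symmetric positive-definite matrix, let s be an integer with 1 ≤ s ≤ n−1, and let γ₁ > 0, γ₂ > 0. Then v(C,s; α=0, γ₁, γ₂) = sup { log det(γ₁(C∘X) + I − diag(x)) − s·log γ₁ : (x,X) ∈ P(n,s) }; that is, at α = 0 the mBQP bound equals the scaled BQP bound. -/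
open Matrix

/-- `memP n t x X` says `(x,X) ∈ P(n,t)` (and `Q(n,n-s)` is `memP n (n-s)`). -/
def memP (n : ℕ) (t : ℝ) (x : Fin n → ℝ) (X : Matrix (Fin n) (Fin n) ℝ) : Prop :=
  X.IsSymm ∧ (X - vecMulVec x x).PosSemidef ∧ (∀ i, X i i = x i) ∧
    (∑ i, x i) = t ∧ X *ᵥ (fun _ => (1 : ℝ)) = t • x

/-- The mBQP objective `g_{α,γ₁,γ₂}(x,X,y,Y)`. -/
noncomputable def gobj (n : ℕ) (C : Matrix (Fin n) (Fin n) ℝ) (s : ℕ)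
    (α γ₁ γ₂ : ℝ) (x : Fin n → ℝ) (X : Matrix (Fin n) (Fin n) ℝ)
    (y : Fin n → ℝ) (Y : Matrix (Fin n) (Fin n) ℝ) : ℝ :=
  (1 - α) * (Real.log (γ₁ • (C.hadamard X) + 1 - Matrix.diagonal x).det
      - s * Real.log γ₁)
  + α * (Real.log (γ₂ • ((C⁻¹).hadamard Y) + 1 - Matrix.diagonal y).det
      - ((n : ℝ) - s) * Real.log γ₂ + Real.log C.det)

/-- The mBQP bound `v(C,s;α,γ₁,γ₂)`. -/
noncomputable def vmix (n : ℕ) (C : Matrix (Fin n) (Fin n) ℝ) (s : ℕ)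
    (α γ₁ γ₂ : ℝ) : ℝ :=
  sSup {r : ℝ | ∃ x X y Y, memP n (s : ℝ) x X ∧ memP n ((n : ℝ) - s) y Y ∧
    x + y = (fun _ => (1 : ℝ)) ∧ r = gobj n C s α γ₁ γ₂ x X y Y}

/-- The strengthened mBQP bound `v̌(C,s;α,γ₁,γ₂)`, obtained by substituting
`y = e - x` and `Y = X + eeᵀ - exᵀ - xeᵀ`. -/
noncomputable def vcheck (n : ℕ) (C : Matrix (Fin n) (Fin n) ℝ) (s : ℕ)
    (α γ₁ γ₂ : ℝ) : ℝ :=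
  sSup {r : ℝ | ∃ x X, memP n (s : ℝ) x X ∧
    r = gobj n C s α γ₁ γ₂ x X ((fun _ => (1 : ℝ)) - x)
      (X + vecMulVec (fun _ => (1 : ℝ)) (fun _ => (1 : ℝ))
        - vecMulVec (fun _ => (1 : ℝ)) x - vecMulVec x (fun _ => (1 : ℝ)))}

/-! At `α = 0` the `(y, Y)` part of the mBQP objective carries weight zero, so the two suprema
agree as soon as every `(x, X) ∈ P(n,s)` extends to a feasible quadruple. The complement
`(e - x, X + eeᵀ - exᵀ - xeᵀ)` lies in `Q(n, n-s)`: its diagonal, row sums and symmetry are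
read off directly, and its Schur complement `Y - yyᵀ` is again `X - xxᵀ`. -/

theorem memP.compl {n : ℕ} {t : ℝ} {x : Fin n → ℝ} {X : Matrix (Fin n) (Fin n) ℝ}
    (h : memP n t x X) :
    memP n (n - t) (1 - x) (X + vecMulVec 1 1 - vecMulVec 1 x - vecMulVec x 1) := by
  obtain ⟨hsymm, hpsd, hdiag, hsum, hmul⟩ := h
  refine ⟨?_, ?_, fun i => ?_, ?_, ?_⟩
  · simp only [IsSymm, transpose_sub, transpose_add, transpose_vecMulVec, hsymm.eq]
    abel
  · have hshift : X + vecMulVec 1 1 - vecMulVec 1 x - vecMulVec x 1 - vecMulVec (1 - x) (1 - x)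
        = X - vecMulVec x x := by
      simp only [sub_vecMulVec, vecMulVec_sub]
      abel
    rwa [hshift]
  · simp [hdiag i]
  · simp [Finset.sum_sub_distrib, hsum]
  · have hdot : x ⬝ᵥ (fun _ => 1) = t := by simp [dotProduct, hsum]
    have hn : (1 : Fin n → ℝ) ⬝ᵥ (fun _ => 1) = n := by simp [dotProduct]
    rw [sub_mulVec, sub_mulVec, add_mulVec, vecMulVec_mulVec, vecMulVec_mulVec,
      vecMulVec_mulVec, hmul, hdot, hn]
    ext i
    simp only [op_smul_eq_smul, Pi.sub_apply, Pi.add_apply, Pi.smul_apply, smul_eq_mul,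
      Pi.one_apply, mul_one]
    ring

theorem gobj_zero (n : ℕ) (C : Matrix (Fin n) (Fin n) ℝ) (s : ℕ) (γ₁ γ₂ : ℝ)
    (x : Fin n → ℝ) (X : Matrix (Fin n) (Fin n) ℝ) (y : Fin n → ℝ)
    (Y : Matrix (Fin n) (Fin n) ℝ) :
    gobj n C s 0 γ₁ γ₂ x X y Y =
      Real.log (γ₁ • (C.hadamard X) + 1 - Matrix.diagonal x).det - s * Real.log γ₁ := by
  simp [gobj]

theorem stmt_13_general (n : ℕ) (C : Matrix (Fin n) (Fin n) ℝ)
    (s : ℕ) (γ₁ γ₂ : ℝ) :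
    vmix n C s 0 γ₁ γ₂ =
      sSup {r : ℝ | ∃ x X, memP n (s : ℝ) x X ∧
        r = Real.log (γ₁ • (C.hadamard X) + 1 - Matrix.diagonal x).det
          - s * Real.log γ₁} := by
  unfold vmix
  congr 1
  ext r
  simp only [gobj_zero]
  constructor
  · rintro ⟨x, X, -, -, hx, -, -, rfl⟩
    exact ⟨x, X, hx, rfl⟩
  · rintro ⟨x, X, hx, rfl⟩
    exact ⟨x, X, _, _, hx, hx.compl, add_sub_cancel x 1, rfl⟩

/-- At `α = 0` the mBQP bound equals the scaled BQP bound. -/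
theorem stmt_13 (n : ℕ) (C : Matrix (Fin n) (Fin n) ℝ) (hC : C.PosDef)
    (s : ℕ) (hs1 : 1 ≤ s) (hs2 : s ≤ n - 1) (γ₁ γ₂ : ℝ)
    (hγ₁ : 0 < γ₁) (hγ₂ : 0 < γ₂) :
    vmix n C s 0 γ₁ γ₂ =
      sSup {r : ℝ | ∃ x X, memP n (s : ℝ) x X ∧
        r = Real.log (γ₁ • (C.hadamard X) + 1 - Matrix.diagonal x).det
          - s * Real.log γ₁} :=
  stmt_13_general n C s γ₁ γ₂
end
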